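/- arXiv:2505.03908 — 2 statements merged into one kernel-verified Lean document; each statement's English description precedes it below -/
import Mathlib

section
/- Let N ≥ 2 and R ≥ N+1, and let F be the following set of flows in C_{N,R}: type 1 flows forming the cross gadget of size N on input switches I_1,…,I_N and output switches O_1,…,O_{N−1} (one demand-1 flow from source j of I_i to destination i of O_j for each i ∈ {1,…,N}, j ∈ {1,…,N−1}); type 2 flows: for each i ∈ {1,…,N}, one demand-1/2 flow from source N of I_i to destination ⌈i/2⌉ of O_N; and one type 3 flow of demand 1 from source N of I_{N+1} to destination N of O_N. Then there exists a routing of F with congestion exactly 3/2; consequently, the minimum congestion OPT(F) equals 3/2. -/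
open Finset

/-- Congestion of a routing `r` of a finite family of flows in the Clos network
`C_{N,R}`. -/
noncomputable def congestion {F : Type*} [Fintype F] {N R : ℕ}
    (inp out : F → Fin R) (dem : F → ℝ) (r : F → Fin N) : ℝ :=
  ⨆ p : Fin R × Fin N,
    max (∑ f ∈ Finset.univ.filter (fun f => inp f = p.1 ∧ r f = p.2), dem f)
        (∑ f ∈ Finset.univ.filter (fun f => out f = p.1 ∧ r f = p.2), dem f)

/-- The flows of the hard instance: `t1 i j` are the cross-gadget flows,
`t2 i` the demand-`1/2` flows into `O_N`, and `t3` the demand-`1` flow from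
`I_{N+1}` into `O_N`. -/
inductive GFlow (N : ℕ) where
  | t1 (i : Fin N) (j : Fin (N - 1))
  | t2 (i : Fin N)
  | t3
  deriving DecidableEq, Fintype

/-- Input switch (0-based) of each flow in `C_{N,R}`, `R ≥ N + 1`. -/
def gInp {N R : ℕ} (hR : N + 1 ≤ R) : GFlow N → Fin R
  | .t1 i _ => ⟨i.1, by have := i.2; omega⟩
  | .t2 i => ⟨i.1, by have := i.2; omega⟩
  | .t3 => ⟨N, by omega⟩

/-- Source index (0-based) of each flow. -/
def gSrc {N : ℕ} (hN : 2 ≤ N) : GFlow N → Fin N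
  | .t1 _ j => ⟨j.1, by have := j.2; omega⟩
  | .t2 _ => ⟨N - 1, by omega⟩
  | .t3 => ⟨N - 1, by omega⟩

/-- Output switch (0-based) of each flow. -/
def gOut {N R : ℕ} (hN : 2 ≤ N) (hR : N + 1 ≤ R) : GFlow N → Fin R
  | .t1 _ j => ⟨j.1, by have := j.2; omega⟩
  | .t2 _ => ⟨N - 1, by omega⟩
  | .t3 => ⟨N - 1, by omega⟩

/-- Destination index (0-based): flow `t1 i j` enters destination `i` of `O_j`;
flow `t2 i` (1-based input switch `i+1`) enters destination `⌈(i+1)/2⌉` of `O_N`,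
which is 0-based `i/2`; `t3` enters destination `N` of `O_N`. -/
def gDst {N : ℕ} (hN : 2 ≤ N) : GFlow N → Fin N
  | .t1 i _ => i
  | .t2 i => ⟨i.1 / 2, by have := i.2; omega⟩
  | .t3 => ⟨N - 1, by omega⟩

/-- Demands: `1` for type 1 and type 3, `1/2` for type 2. -/
noncomputable def gDem {N : ℕ} : GFlow N → ℝ
  | .t1 _ _ => 1
  | .t2 _ => 1 / 2
  | .t3 => 1

/-- The minimum congestion over all routings. -/
noncomputable def OPT {F : Type*} [Fintype F] (N : ℕ) {R : ℕ}
    (inp out : F → Fin R) (dem : F → ℝ) : ℝ :=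
  ⨅ r : F → Fin N, congestion inp out dem r

/-! ### Auxiliary material -/

lemma gDem_nonneg {N : ℕ} (f : GFlow N) : 0 ≤ gDem f := by
  cases f <;> norm_num [gDem]

/-- Identify `GFlow N` with a sum type, for summation purposes. -/
def gEquiv (N : ℕ) : (Fin N × Fin (N - 1)) ⊕ (Fin N ⊕ Unit) ≃ GFlow N where
  toFun x := match x with
    | .inl (i, j) => .t1 i j
    | .inr (.inl i) => .t2 i
    | .inr (.inr _) => .t3
  invFun f := match f with
    | .t1 i j => .inl (i, j)
    | .t2 i => .inr (.inl i)
    | .t3 => .inr (.inr ())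
  left_inv := by rintro (⟨i, j⟩ | i | ⟨⟩) <;> rfl
  right_inv := by intro f; cases f <;> rfl

lemma sum_gflow {N : ℕ} (g : GFlow N → ℝ) :
    ∑ f : GFlow N, g f =
      (∑ i : Fin N, ∑ j : Fin (N - 1), g (.t1 i j)) +
        ((∑ i : Fin N, g (.t2 i)) + g .t3) := by
  rw [← Fintype.sum_equiv (gEquiv N) (fun x => g (gEquiv N x)) g (fun _ => rfl)]
  rw [Fintype.sum_sum_type, Fintype.sum_sum_type, Fintype.sum_prod_type]
  simp [gEquiv]

lemma mod_cancel_right {N a b c : ℕ} (hb : b < N) (hc : c < N)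
    (h : (a + b) % N = (a + c) % N) : b = c := by
  have h2 : b ≡ c [MOD N] := Nat.ModEq.add_left_cancel' a h
  rwa [Nat.ModEq, Nat.mod_eq_of_lt hb, Nat.mod_eq_of_lt hc] at h2

lemma mod_cancel_left {N a b c : ℕ} (hb : b < N) (hc : c < N)
    (h : (b + a) % N = (c + a) % N) : b = c := by
  have h2 : b ≡ c [MOD N] := Nat.ModEq.add_right_cancel' a h
  rwa [Nat.ModEq, Nat.mod_eq_of_lt hb, Nat.mod_eq_of_lt hc] at h2

lemma subset_inLoad_le {N R : ℕ} (hN : 2 ≤ N) (hR : N + 1 ≤ R)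
    (r : GFlow N → Fin N) (p : Fin R) (m : Fin N) (s : Finset (GFlow N))
    (hs : ∀ f ∈ s, gInp hR f = p ∧ r f = m) :
    ∑ f ∈ s, gDem f ≤ congestion (gInp hR) (gOut hN hR) gDem r := by
  refine le_trans ?_ (le_ciSup (f := fun p : Fin R × Fin N =>
    max (∑ f ∈ Finset.univ.filter (fun f => gInp hR f = p.1 ∧ r f = p.2), gDem f)
        (∑ f ∈ Finset.univ.filter (fun f => gOut hN hR f = p.1 ∧ r f = p.2), gDem f))
    (Set.Finite.bddAbove (Set.finite_range _)) (p, m))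
  refine le_trans ?_ (le_max_left _ _)
  exact Finset.sum_le_sum_of_subset_of_nonneg
    (fun f hf => mem_filter.2 ⟨mem_univ f, hs f hf⟩) (fun f _ _ => gDem_nonneg f)

lemma subset_outLoad_le {N R : ℕ} (hN : 2 ≤ N) (hR : N + 1 ≤ R)
    (r : GFlow N → Fin N) (p : Fin R) (m : Fin N) (s : Finset (GFlow N))
    (hs : ∀ f ∈ s, gOut hN hR f = p ∧ r f = m) :
    ∑ f ∈ s, gDem f ≤ congestion (gInp hR) (gOut hN hR) gDem r := by
  refine le_trans ?_ (le_ciSup (f := fun p : Fin R × Fin N =>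
    max (∑ f ∈ Finset.univ.filter (fun f => gInp hR f = p.1 ∧ r f = p.2), gDem f)
        (∑ f ∈ Finset.univ.filter (fun f => gOut hN hR f = p.1 ∧ r f = p.2), gDem f))
    (Set.Finite.bddAbove (Set.finite_range _)) (p, m))
  refine le_trans ?_ (le_max_right _ _)
  exact Finset.sum_le_sum_of_subset_of_nonneg
    (fun f hf => mem_filter.2 ⟨mem_univ f, hs f hf⟩) (fun f _ _ => gDem_nonneg f)

/-- The lower bound: every routing has congestion at least `3/2`. -/
lemma congestion_lb {N R : ℕ} (hN : 2 ≤ N) (hR : N + 1 ≤ R)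
    (r : GFlow N → Fin N) :
    3 / 2 ≤ congestion (gInp hR) (gOut hN hR) gDem r := by
  by_contra hC
  push_neg at hC
  -- Fact 1: flows of a common input switch with demand 1 use distinct middles.
  have fact1 : ∀ (i : Fin N) (j₁ j₂ : Fin (N - 1)),
      r (.t1 i j₁) = r (.t1 i j₂) → j₁ = j₂ := by
    intro i j₁ j₂ h
    by_contra hne
    have hsub := subset_inLoad_le hN hR r (gInp hR (.t1 i j₁)) (r (.t1 i j₁))
      {GFlow.t1 i j₁, GFlow.t1 i j₂} ?_
    · rw [Finset.sum_pair (by simp [hne])] at hsub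
      simp only [gDem] at hsub
      linarith
    · intro f hf
      simp only [mem_insert, mem_singleton] at hf
      rcases hf with rfl | rfl
      · exact ⟨rfl, rfl⟩
      · exact ⟨rfl, h.symm⟩
  -- Fact 2: the type-2 flow of an input switch avoids the middles of its t1 flows.
  have fact2 : ∀ (i : Fin N) (j : Fin (N - 1)), r (.t2 i) ≠ r (.t1 i j) := by
    intro i j h
    have hsub := subset_inLoad_le hN hR r (gInp hR (.t2 i)) (r (.t2 i))
      {GFlow.t2 i, GFlow.t1 i j} ?_
    · rw [Finset.sum_pair (by simp)] at hsub
      simp only [gDem] at hsub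
      linarith
    · intro f hf
      simp only [mem_insert, mem_singleton] at hf
      rcases hf with rfl | rfl
      · exact ⟨rfl, rfl⟩
      · exact ⟨rfl, h.symm⟩
  -- Fact 3: flows of a common output switch use distinct middles.
  have fact3 : ∀ (j : Fin (N - 1)) (i₁ i₂ : Fin N),
      r (.t1 i₁ j) = r (.t1 i₂ j) → i₁ = i₂ := by
    intro j i₁ i₂ h
    by_contra hne
    have hsub := subset_outLoad_le hN hR r (gOut hN hR (.t1 i₁ j)) (r (.t1 i₁ j))
      {GFlow.t1 i₁ j, GFlow.t1 i₂ j} ?_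
    · rw [Finset.sum_pair (by simp [hne])] at hsub
      simp only [gDem] at hsub
      linarith
    · intro f hf
      simp only [mem_insert, mem_singleton] at hf
      rcases hf with rfl | rfl
      · exact ⟨rfl, rfl⟩
      · exact ⟨rfl, h.symm⟩
  -- Fact 4: t3 avoids the middles of all t2 flows.
  have fact4 : ∀ i : Fin N, r .t3 ≠ r (.t2 i) := by
    intro i h
    have hsub := subset_outLoad_le hN hR r (gOut hN hR .t3) (r .t3)
      {GFlow.t3, GFlow.t2 i} ?_
    · rw [Finset.sum_pair (by simp)] at hsub
      simp only [gDem] at hsub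
      linarith
    · intro f hf
      simp only [mem_insert, mem_singleton] at hf
      rcases hf with rfl | rfl
      · exact ⟨rfl, rfl⟩
      · exact ⟨rfl, h.symm⟩
  -- In each row `i` some `t1` flow uses the middle of `t3`.
  have hrow : ∀ i : Fin N, ∃ j : Fin (N - 1), r (.t1 i j) = r .t3 := by
    intro i
    by_contra h
    push_neg at h
    set img : Finset (Fin N) := Finset.univ.image (fun j : Fin (N - 1) => r (.t1 i j)) with himg
    have hcard : img.card = N - 1 := by
      rw [himg, Finset.card_image_of_injective _ (fun j₁ j₂ hj => fact1 i j₁ j₂ hj)]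
      simp
    have hsubset : img ⊆ (Finset.univ.erase (r (.t2 i))).erase (r .t3) := by
      intro m hm
      rw [himg, Finset.mem_image] at hm
      obtain ⟨j, -, rfl⟩ := hm
      exact Finset.mem_erase.2 ⟨fun hh => h j hh,
        Finset.mem_erase.2 ⟨fun hh => fact2 i j hh.symm, Finset.mem_univ _⟩⟩
    have hc2 : ((Finset.univ.erase (r (.t2 i))).erase (r .t3)).card = N - 2 := by
      rw [Finset.card_erase_of_mem, Finset.card_erase_of_mem (Finset.mem_univ _)]
      · simp; omega
      · exact Finset.mem_erase.2 ⟨fact4 i, Finset.mem_univ _⟩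
    have := Finset.card_le_card hsubset
    omega
  choose φ hφ using hrow
  have hinj : Function.Injective φ := by
    intro i₁ i₂ h
    apply fact3 (φ i₁) i₁ i₂
    rw [hφ i₁, h, hφ i₂]
  have := Fintype.card_le_of_injective φ hinj
  simp at this
  omega

/-- The good routing. -/
def gRoute {N : ℕ} (hN : 2 ≤ N) : GFlow N → Fin N
  | .t1 i j => ⟨(i.1 + j.1) % N, Nat.mod_lt _ (by omega)⟩
  | .t2 i => i
  | .t3 => ⟨0, by omega⟩

/-- Helper: a sum of indicator-`c` over a set with at most one element satisfying
the predicate is at most `c`. -/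
lemma ite_sum_le {α : Type*} (s : Finset α) (P : α → Prop) [DecidablePred P]
    (h : ∀ a ∈ s, ∀ b ∈ s, P a → P b → a = b) {c : ℝ} (hc : 0 ≤ c) :
    ∑ a ∈ s, (if P a then c else 0) ≤ c := by
  rw [← Finset.sum_filter, Finset.sum_const]
  have hcard : (s.filter P).card ≤ 1 :=
    Finset.card_le_one.2 (fun a ha b hb =>
      h a (Finset.mem_filter.1 ha).1 b (Finset.mem_filter.1 hb).1
        (Finset.mem_filter.1 ha).2 (Finset.mem_filter.1 hb).2)
  rw [nsmul_eq_mul]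
  calc ((s.filter P).card : ℝ) * c ≤ 1 * c :=
        mul_le_mul_of_nonneg_right (by exact_mod_cast hcard) hc
    _ = c := one_mul c

/-- The upper bound for the good routing. -/
lemma congestion_ub {N R : ℕ} (hN : 2 ≤ N) (hR : N + 1 ≤ R) :
    congestion (gInp hR) (gOut hN hR) gDem (gRoute hN) ≤ 3 / 2 := by
  have hne : Nonempty (Fin R × Fin N) := ⟨⟨⟨0, by omega⟩, ⟨0, by omega⟩⟩⟩
  apply ciSup_le
  rintro ⟨p, m⟩
  apply max_le
  · -- input side
    rw [Finset.sum_filter, sum_gflow]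
    simp only [gInp, gRoute, gDem, Fin.mk.injEq, Fin.ext_iff]
    rcases lt_or_ge p.1 N with hp | hp
    · -- p is a genuine input switch
      have h3 : (if ((N : ℕ) = p.1 ∧ (0 : ℕ) = m.1) then (1 : ℝ) else 0) = 0 := by
        rw [if_neg]; rintro ⟨h, -⟩; omega
      have h1 : (∑ i : Fin N, ∑ j : Fin (N - 1),
          if ((i.1 : ℕ) = p.1 ∧ (i.1 + j.1) % N = m.1) then (1 : ℝ) else 0) ≤ 1 := by
        rw [← Finset.sum_product']
        apply ite_sum_le _ (fun x : Fin N × Fin (N - 1) =>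
          (x.1.1 : ℕ) = p.1 ∧ (x.1.1 + x.2.1) % N = m.1) ?_ (by norm_num)
        rintro a - b - ⟨ha1, ha2⟩ ⟨hb1, hb2⟩
        have hi : a.1 = b.1 := Fin.ext (by omega)
        have hj : a.2 = b.2 := by
          apply Fin.ext
          apply mod_cancel_right (N := N) (a := a.1.1)
            (by have := a.2.2; omega) (by have := b.2.2; omega)
          rw [ha2, ← hb2, hi]
        exact Prod.ext hi hj
      have h2 : (∑ i : Fin N,
          if ((i.1 : ℕ) = p.1 ∧ (i.1 : ℕ) = m.1) then (1 / 2 : ℝ) else 0) ≤ 1 / 2 := by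
        apply ite_sum_le _ (fun i : Fin N => (i.1 : ℕ) = p.1 ∧ (i.1 : ℕ) = m.1) ?_
          (by norm_num)
        rintro a - b - ⟨ha1, -⟩ ⟨hb1, -⟩
        exact Fin.ext (by omega)
      rw [h3]
      linarith
    · -- p ≥ N : only possibly t3
      have h1 : (∑ i : Fin N, ∑ j : Fin (N - 1),
          if ((i.1 : ℕ) = p.1 ∧ (i.1 + j.1) % N = m.1) then (1 : ℝ) else 0) = 0 := by
        apply Finset.sum_eq_zero; intro i _
        apply Finset.sum_eq_zero; intro j _
        rw [if_neg]; rintro ⟨h, -⟩; have := i.2; omega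
      have h2 : (∑ i : Fin N,
          if ((i.1 : ℕ) = p.1 ∧ (i.1 : ℕ) = m.1) then (1 / 2 : ℝ) else 0) = 0 := by
        apply Finset.sum_eq_zero; intro i _
        rw [if_neg]; rintro ⟨h, -⟩; have := i.2; omega
      have h3 : (if ((N : ℕ) = p.1 ∧ (0 : ℕ) = m.1) then (1 : ℝ) else 0) ≤ 1 := by
        split <;> norm_num
      rw [h1, h2]
      linarith
  · -- output side
    rw [Finset.sum_filter, sum_gflow]
    simp only [gOut, gRoute, gDem, Fin.mk.injEq, Fin.ext_iff]
    by_cases hp : p.1 = N - 1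
    · -- p is the last genuine output switch
      have h1 : (∑ i : Fin N, ∑ j : Fin (N - 1),
          if ((j.1 : ℕ) = p.1 ∧ (i.1 + j.1) % N = m.1) then (1 : ℝ) else 0) = 0 := by
        apply Finset.sum_eq_zero; intro i _
        apply Finset.sum_eq_zero; intro j _
        rw [if_neg]; rintro ⟨h, -⟩; have := j.2; omega
      have h2 : (∑ i : Fin N,
          if ((N - 1 : ℕ) = p.1 ∧ (i.1 : ℕ) = m.1) then (1 / 2 : ℝ) else 0) ≤ 1 / 2 := by
        apply ite_sum_le _ (fun i : Fin N => (N - 1 : ℕ) = p.1 ∧ (i.1 : ℕ) = m.1) ?_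
          (by norm_num)
        rintro a - b - ⟨-, ha1⟩ ⟨-, hb1⟩
        exact Fin.ext (by omega)
      have h3 : (if ((N - 1 : ℕ) = p.1 ∧ (0 : ℕ) = m.1) then (1 : ℝ) else 0) ≤ 1 := by
        split <;> norm_num
      rw [h1]
      linarith
    · -- p is some other output switch
      have h2 : (∑ i : Fin N,
          if ((N - 1 : ℕ) = p.1 ∧ (i.1 : ℕ) = m.1) then (1 / 2 : ℝ) else 0) = 0 := by
        apply Finset.sum_eq_zero; intro i _
        rw [if_neg]; rintro ⟨h, -⟩; omega
      have h3 : (if ((N - 1 : ℕ) = p.1 ∧ (0 : ℕ) = m.1) then (1 : ℝ) else 0) = 0 := by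
        rw [if_neg]; rintro ⟨h, -⟩; omega
      have h1 : (∑ i : Fin N, ∑ j : Fin (N - 1),
          if ((j.1 : ℕ) = p.1 ∧ (i.1 + j.1) % N = m.1) then (1 : ℝ) else 0) ≤ 1 := by
        rw [← Finset.sum_product']
        apply ite_sum_le _ (fun x : Fin N × Fin (N - 1) =>
          (x.2.1 : ℕ) = p.1 ∧ (x.1.1 + x.2.1) % N = m.1) ?_ (by norm_num)
        rintro a - b - ⟨ha1, ha2⟩ ⟨hb1, hb2⟩
        have hj : a.2 = b.2 := Fin.ext (by omega)
        have hi : a.1 = b.1 := by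
          apply Fin.ext
          apply mod_cancel_left (N := N) (a := a.2.1) a.1.2 b.1.2
          rw [ha2, ← hb2, hj]
        exact Prod.ext hi hj
      rw [h2, h3]
      linarith

/-- The hard instance in `C_{N,R}` (`N ≥ 2`, `R ≥ N + 1`) admits a routing with
congestion exactly `3/2`; consequently the minimum congestion `OPT` equals `3/2`. -/
theorem hard_instance_opt_eq {N R : ℕ} (hN : 2 ≤ N) (hR : N + 1 ≤ R) :
    (∃ r : GFlow N → Fin N,
        congestion (gInp hR) (gOut hN hR) gDem r = 3 / 2) ∧
    OPT N (gInp hR) (gOut hN hR) gDem = 3 / 2 := by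
  have hopt : congestion (gInp hR) (gOut hN hR) gDem (gRoute hN) = 3 / 2 :=
    le_antisymm (congestion_ub hN hR) (congestion_lb hN hR (gRoute hN))
  refine ⟨⟨gRoute hN, hopt⟩, ?_⟩
  have hne : Nonempty (GFlow N → Fin N) := ⟨gRoute hN⟩
  apply le_antisymm
  · calc OPT N (gInp hR) (gOut hN hR) gDem
        ≤ congestion (gInp hR) (gOut hN hR) gDem (gRoute hN) :=
          ciInf_le ⟨3 / 2, fun x ⟨r, hr⟩ => hr ▸ congestion_lb hN hR r⟩ _
      _ = 3 / 2 := hopt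
  · exact le_ciInf (fun r => congestion_lb hN hR r)
end

section
/- Let N = 2n ≥ 2 be even, R ≥ 3, and S = ⌊R/3⌋. For every deterministic online algorithm A on C_{N,R}, the sum over all subsets B ⊆ {1,…,S} of the congestion of the routing induced by A on the sequence S_B is at least 2·2^S − 1; equivalently, the expected congestion of A when the sequence S_B is drawn with B uniform over the 2^S subsets is at least 2 − 1/2^S. -/
open Finset

/-- A unit-demand flow in the Clos network `C_{N,R}`. -/
structure UFlow (N R : ℕ) where
  inp : Fin R
  src : Fin N
  out : Fin R
  dst : Fin N
  deriving DecidableEq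

/-- The routing induced by a deterministic online algorithm `A` on a sequence `L` of
flows: the flow at position `t` is assigned the middle switch `A (f₁, …, f_t)`. -/
def assign {N R : ℕ} (A : List (UFlow N R) → Fin N) (L : List (UFlow N R)) :
    Fin L.length → Fin N :=
  fun t => A (L.take (t.1 + 1))

/-- Number of flows of `L` routed by the induced routing through input link
`I_i M_mm`. -/
def inCount {N R : ℕ} (A : List (UFlow N R) → Fin N) (L : List (UFlow N R))
    (i : Fin R) (mm : Fin N) : ℕ :=
  (Finset.univ.filter fun t : Fin L.length =>
    (L.get t).inp = i ∧ assign A L t = mm).card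

/-- Number of flows of `L` routed by the induced routing through output link
`M_mm O_i`. -/
def outCount {N R : ℕ} (A : List (UFlow N R) → Fin N) (L : List (UFlow N R))
    (i : Fin R) (mm : Fin N) : ℕ :=
  (Finset.univ.filter fun t : Fin L.length =>
    (L.get t).out = i ∧ assign A L t = mm).card

/-- The congestion (a natural number, all demands being `1`) of the routing induced
by the online algorithm `A` on the sequence `L`: the maximum over all links of the
number of flows routed through that link. -/
def congA {N R : ℕ} (A : List (UFlow N R) → Fin N) (L : List (UFlow N R)) : ℕ :=
  Finset.univ.sup fun p : Fin R × Fin N =>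
    max (inCount A L p.1 p.2) (outCount A L p.1 p.2)

lemma le_congA_in {N R : ℕ} (A : List (UFlow N R) → Fin N) (L : List (UFlow N R))
    (i : Fin R) (m : Fin N) : inCount A L i m ≤ congA A L :=
  le_trans (le_max_left _ _) (Finset.le_sup (f := fun p : Fin R × Fin N =>
    max (inCount A L p.1 p.2) (outCount A L p.1 p.2)) (Finset.mem_univ (i, m)))

lemma le_congA_out {N R : ℕ} (A : List (UFlow N R) → Fin N) (L : List (UFlow N R))
    (i : Fin R) (m : Fin N) : outCount A L i m ≤ congA A L :=
  le_trans (le_max_right _ _) (Finset.le_sup (f := fun p : Fin R × Fin N =>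
    max (inCount A L p.1 p.2) (outCount A L p.1 p.2)) (Finset.mem_univ (i, m)))

lemma two_le_congA {N R : ℕ} (A : List (UFlow N R) → Fin N) (L : List (UFlow N R))
    (t1 t2 : Fin L.length) (hne : t1 ≠ t2) (hm : assign A L t1 = assign A L t2)
    (h : (L.get t1).inp = (L.get t2).inp ∨ (L.get t1).out = (L.get t2).out) :
    2 ≤ congA A L := by
  rcases h with h | h
  · refine le_trans ?_ (le_congA_in A L (L.get t1).inp (assign A L t1))
    rw [inCount]
    have hsub : ({t1, t2} : Finset (Fin L.length)) ⊆
        Finset.univ.filter fun t => (L.get t).inp = (L.get t1).inp ∧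
          assign A L t = assign A L t1 := by
      intro t ht
      simp only [Finset.mem_insert, Finset.mem_singleton] at ht
      rcases ht with rfl | rfl
      · simp
      · exact Finset.mem_filter.mpr ⟨Finset.mem_univ _, h.symm, hm.symm⟩
    calc 2 = ({t1, t2} : Finset (Fin L.length)).card := (Finset.card_pair hne).symm
      _ ≤ _ := Finset.card_le_card hsub
  · refine le_trans ?_ (le_congA_out A L (L.get t1).out (assign A L t1))
    rw [outCount]
    have hsub : ({t1, t2} : Finset (Fin L.length)) ⊆
        Finset.univ.filter fun t => (L.get t).out = (L.get t1).out ∧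
          assign A L t = assign A L t1 := by
      intro t ht
      simp only [Finset.mem_insert, Finset.mem_singleton] at ht
      rcases ht with rfl | rfl
      · simp
      · exact Finset.mem_filter.mpr ⟨Finset.mem_univ _, h.symm, hm.symm⟩
    calc 2 = ({t1, t2} : Finset (Fin L.length)).card := (Finset.card_pair hne).symm
      _ ≤ _ := Finset.card_le_card hsub

lemma one_le_congA {N R : ℕ} (A : List (UFlow N R) → Fin N) (L : List (UFlow N R))
    (h : L ≠ []) : 1 ≤ congA A L := by
  have hl : 0 < L.length := List.length_pos_iff.mpr h
  refine le_trans ?_ (le_congA_in A L (L.get ⟨0, hl⟩).inp (assign A L ⟨0, hl⟩))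
  rw [inCount]
  exact Finset.card_pos.mpr ⟨⟨0, hl⟩, by simp⟩


/-- The translation `X_j` of sequence `X` to the `j`-th block of `C_{2n,R}`
(input switches `3j, 3j+1, 3j+2`, output switches `3j, 3j+1`, 0-based):
`n` flows `I₁ → O₁` and `n` flows `I₂ → O₂` (the prefix), then `n` flows
`I₁ → O₂`; flows sharing an input (output) switch use pairwise distinct sources
(destinations). -/
def blkX (n R : ℕ) (j : Fin (R / 3)) : List (UFlow (2 * n) R) :=
  ((List.finRange n).map fun k =>
    (⟨⟨3 * j.1, by have := j.2; omega⟩, ⟨k.1, by have := k.2; omega⟩,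
      ⟨3 * j.1, by have := j.2; omega⟩, ⟨k.1, by have := k.2; omega⟩⟩ :
      UFlow (2 * n) R)) ++
  ((List.finRange n).map fun k =>
    (⟨⟨3 * j.1 + 1, by have := j.2; omega⟩, ⟨k.1, by have := k.2; omega⟩,
      ⟨3 * j.1 + 1, by have := j.2; omega⟩, ⟨k.1, by have := k.2; omega⟩⟩ :
      UFlow (2 * n) R)) ++
  ((List.finRange n).map fun k =>
    (⟨⟨3 * j.1, by have := j.2; omega⟩, ⟨n + k.1, by have := k.2; omega⟩,
      ⟨3 * j.1 + 1, by have := j.2; omega⟩, ⟨n + k.1, by have := k.2; omega⟩⟩ :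
      UFlow (2 * n) R))

/-- The translation `Y_j` of sequence `Y` to the `j`-th block of `C_{2n,R}`:
the prefix `X1`, then `n` flows `I₃ → O₁` and `n` flows `I₃ → O₂`. -/
def blkY (n R : ℕ) (j : Fin (R / 3)) : List (UFlow (2 * n) R) :=
  ((List.finRange n).map fun k =>
    (⟨⟨3 * j.1, by have := j.2; omega⟩, ⟨k.1, by have := k.2; omega⟩,
      ⟨3 * j.1, by have := j.2; omega⟩, ⟨k.1, by have := k.2; omega⟩⟩ :
      UFlow (2 * n) R)) ++
  ((List.finRange n).map fun k =>
    (⟨⟨3 * j.1 + 1, by have := j.2; omega⟩, ⟨k.1, by have := k.2; omega⟩,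
      ⟨3 * j.1 + 1, by have := j.2; omega⟩, ⟨k.1, by have := k.2; omega⟩⟩ :
      UFlow (2 * n) R)) ++
  ((List.finRange n).map fun k =>
    (⟨⟨3 * j.1 + 2, by have := j.2; omega⟩, ⟨k.1, by have := k.2; omega⟩,
      ⟨3 * j.1, by have := j.2; omega⟩, ⟨n + k.1, by have := k.2; omega⟩⟩ :
      UFlow (2 * n) R)) ++
  ((List.finRange n).map fun k =>
    (⟨⟨3 * j.1 + 2, by have := j.2; omega⟩, ⟨n + k.1, by have := k.2; omega⟩,
      ⟨3 * j.1 + 1, by have := j.2; omega⟩, ⟨n + k.1, by have := k.2; omega⟩⟩ :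
      UFlow (2 * n) R))

def blk1 (n R : ℕ) (j : Fin (R / 3)) : List (UFlow (2 * n) R) :=
  ((List.finRange n).map fun k =>
    (⟨⟨3 * j.1, by have := j.2; omega⟩, ⟨k.1, by have := k.2; omega⟩,
      ⟨3 * j.1, by have := j.2; omega⟩, ⟨k.1, by have := k.2; omega⟩⟩ :
      UFlow (2 * n) R)) ++
  ((List.finRange n).map fun k =>
    (⟨⟨3 * j.1 + 1, by have := j.2; omega⟩, ⟨k.1, by have := k.2; omega⟩,
      ⟨3 * j.1 + 1, by have := j.2; omega⟩, ⟨k.1, by have := k.2; omega⟩⟩ :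
      UFlow (2 * n) R))

def xtl (n R : ℕ) (j : Fin (R / 3)) : List (UFlow (2 * n) R) :=
  (List.finRange n).map fun k =>
    (⟨⟨3 * j.1, by have := j.2; omega⟩, ⟨n + k.1, by have := k.2; omega⟩,
      ⟨3 * j.1 + 1, by have := j.2; omega⟩, ⟨n + k.1, by have := k.2; omega⟩⟩ :
      UFlow (2 * n) R)

def ytl (n R : ℕ) (j : Fin (R / 3)) : List (UFlow (2 * n) R) :=
  ((List.finRange n).map fun k =>
    (⟨⟨3 * j.1 + 2, by have := j.2; omega⟩, ⟨k.1, by have := k.2; omega⟩,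
      ⟨3 * j.1, by have := j.2; omega⟩, ⟨n + k.1, by have := k.2; omega⟩⟩ :
      UFlow (2 * n) R)) ++
  ((List.finRange n).map fun k =>
    (⟨⟨3 * j.1 + 2, by have := j.2; omega⟩, ⟨n + k.1, by have := k.2; omega⟩,
      ⟨3 * j.1 + 1, by have := j.2; omega⟩, ⟨n + k.1, by have := k.2; omega⟩⟩ :
      UFlow (2 * n) R))

lemma blkX_eq (n R : ℕ) (j : Fin (R / 3)) : blkX n R j = blk1 n R j ++ xtl n R j := rfl

lemma blkY_eq (n R : ℕ) (j : Fin (R / 3)) : blkY n R j = blk1 n R j ++ ytl n R j := by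
  simp only [blkY, blk1, ytl, List.append_assoc]

@[simp] lemma length_blk1 (n R : ℕ) (j : Fin (R / 3)) : (blk1 n R j).length = 2 * n := by
  simp [blk1]; omega

@[simp] lemma length_xtl (n R : ℕ) (j : Fin (R / 3)) : (xtl n R j).length = n := by
  simp [xtl]

@[simp] lemma length_ytl (n R : ℕ) (j : Fin (R / 3)) : (ytl n R j).length = 2 * n := by
  simp [ytl]; omega

-- getElem facts: only inp and out components needed
lemma blk1_lo (n R : ℕ) (j : Fin (R / 3)) (k : ℕ) (hk : k < n)
    (h : k < (blk1 n R j).length) :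
    ((blk1 n R j)[k]).inp = ⟨3 * j.1, by have := j.2; omega⟩ ∧
    ((blk1 n R j)[k]).out = ⟨3 * j.1, by have := j.2; omega⟩ := by
  simp only [blk1]; rw [List.getElem_append_left (by simpa using hk)]
  simp

lemma blk1_hi (n R : ℕ) (j : Fin (R / 3)) (k : ℕ) (hk : k < n)
    (h : n + k < (blk1 n R j).length) :
    ((blk1 n R j)[n + k]).inp = ⟨3 * j.1 + 1, by have := j.2; omega⟩ ∧
    ((blk1 n R j)[n + k]).out = ⟨3 * j.1 + 1, by have := j.2; omega⟩ := by
  simp only [blk1]; rw [List.getElem_append_right (by simp)]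
  simp [hk]

lemma xtl_get (n R : ℕ) (j : Fin (R / 3)) (k : ℕ) (hk : k < n)
    (h : k < (xtl n R j).length) :
    ((xtl n R j)[k]).inp = ⟨3 * j.1, by have := j.2; omega⟩ ∧
    ((xtl n R j)[k]).out = ⟨3 * j.1 + 1, by have := j.2; omega⟩ := by
  simp only [xtl]; simp

lemma ytl_lo (n R : ℕ) (j : Fin (R / 3)) (k : ℕ) (hk : k < n)
    (h : k < (ytl n R j).length) :
    ((ytl n R j)[k]).inp = ⟨3 * j.1 + 2, by have := j.2; omega⟩ ∧
    ((ytl n R j)[k]).out = ⟨3 * j.1, by have := j.2; omega⟩ := by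
  simp only [ytl]; rw [List.getElem_append_left (by simpa using hk)]
  simp

lemma ytl_hi (n R : ℕ) (j : Fin (R / 3)) (k : ℕ) (hk : k < n)
    (h : n + k < (ytl n R j).length) :
    ((ytl n R j)[n + k]).inp = ⟨3 * j.1 + 2, by have := j.2; omega⟩ ∧
    ((ytl n R j)[n + k]).out = ⟨3 * j.1 + 1, by have := j.2; omega⟩ := by
  simp only [ytl]; rw [List.getElem_append_right (by simp)]
  simp [hk]

lemma getElem_concat_mid {α : Type*} (L M T Z : List α) (hZ : Z = L ++ (M ++ T))
    (p m : ℕ) (hp : p = L.length + m) (hm : m < M.length) (h : p < Z.length) :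
    Z[p] = M[m] := by
  subst hZ hp
  rw [List.getElem_append_right (Nat.le_add_right _ _),
    List.getElem_append_left (by simpa using hm)]
  simp


set_option maxHeartbeats 4000000
lemma key {n R : ℕ} (hn : 1 ≤ n) (A : List (UFlow (2 * n) R) → Fin (2 * n))
    (j : Fin (R / 3)) (L1 L2 L2' : List (UFlow (2 * n) R))
    (hY : congA A (L1 ++ blkY n R j ++ L2) ≤ 1)
    (hX : congA A (L1 ++ blkX n R j ++ L2') ≤ 1) : False := by
  have hj : 3 * j.1 + 2 < R := by have := j.2; omega
  set p0 := L1.length with hp0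
  set LY := L1 ++ blkY n R j ++ L2 with hLYdef
  set LX := L1 ++ blkX n R j ++ L2' with hLXdef
  have hYs1 : LY = L1 ++ (blk1 n R j ++ (ytl n R j ++ L2)) := by
    rw [hLYdef, blkY_eq]; simp [List.append_assoc]
  have hYs2 : LY = (L1 ++ blk1 n R j) ++ (ytl n R j ++ L2) := by
    rw [hYs1]; simp [List.append_assoc]
  have hXs1 : LX = L1 ++ (blk1 n R j ++ (xtl n R j ++ L2')) := by
    rw [hLXdef, blkX_eq]; simp [List.append_assoc]
  have hXs2 : LX = (L1 ++ blk1 n R j) ++ (xtl n R j ++ L2') := by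
    rw [hXs1]; simp [List.append_assoc]
  have hLYlen : LY.length = p0 + (4 * n + L2.length) := by
    rw [hYs1]; simp; omega
  have hLXlen : LX.length = p0 + (3 * n + L2'.length) := by
    rw [hXs1]; simp; omega
  have hbY : ∀ m, m < 4 * n → p0 + m < LY.length := by intro m hm; omega
  have hbX : ∀ m, m < 3 * n → p0 + m < LX.length := by intro m hm; omega
  -- assignments on the common prefix
  have hassY : ∀ (m : ℕ) (hm : m < 2 * n) (h : p0 + m < LY.length),
      assign A LY ⟨p0 + m, h⟩ = A ((L1 ++ blk1 n R j).take (p0 + m + 1)) := by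
    intro m hm h
    show A (LY.take (p0 + m + 1)) = _
    rw [hYs2, List.take_append_of_le_length (by simp; omega)]
  have hassX : ∀ (m : ℕ) (hm : m < 2 * n) (h : p0 + m < LX.length),
      assign A LX ⟨p0 + m, h⟩ = A ((L1 ++ blk1 n R j).take (p0 + m + 1)) := by
    intro m hm h
    show A (LX.take (p0 + m + 1)) = _
    rw [hXs2, List.take_append_of_le_length (by simp; omega)]
  -- get values
  have hgetY1 : ∀ (m : ℕ) (hm : m < 2 * n) (h : p0 + m < LY.length),
      LY.get ⟨p0 + m, h⟩ = (blk1 n R j)[m]'(by simp; omega) := by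
    intro m hm h
    rw [List.get_eq_getElem]
    exact getElem_concat_mid L1 (blk1 n R j) (ytl n R j ++ L2) LY hYs1 _ m rfl _ h
  have hgetY2 : ∀ (m : ℕ) (hm : m < 2 * n) (h : p0 + (2 * n + m) < LY.length),
      LY.get ⟨p0 + (2 * n + m), h⟩ = (ytl n R j)[m]'(by simp; omega) := by
    intro m hm h
    rw [List.get_eq_getElem]
    exact getElem_concat_mid (L1 ++ blk1 n R j) (ytl n R j) L2 LY
      hYs2 _ m (by simp; omega) (by simp; omega) h
  have hgetX1 : ∀ (m : ℕ) (hm : m < 2 * n) (h : p0 + m < LX.length),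
      LX.get ⟨p0 + m, h⟩ = (blk1 n R j)[m]'(by simp; omega) := by
    intro m hm h
    rw [List.get_eq_getElem]
    exact getElem_concat_mid L1 (blk1 n R j) (xtl n R j ++ L2') LX hXs1 _ m rfl _ h
  have hgetX2 : ∀ (m : ℕ) (hm : m < n) (h : p0 + (2 * n + m) < LX.length),
      LX.get ⟨p0 + (2 * n + m), h⟩ = (xtl n R j)[m]'(by simp; omega) := by
    intro m hm h
    rw [List.get_eq_getElem]
    exact getElem_concat_mid (L1 ++ blk1 n R j) (xtl n R j) L2' LX
      hXs2 _ m (by simp; omega) (by simp; omega) h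
  -- the prefix-determined middle switches
  set a : Fin n → Fin (2 * n) :=
    (fun k => A ((L1 ++ blk1 n R j).take (p0 + k.1 + 1))) with ha
  set b : Fin n → Fin (2 * n) :=
    (fun k => A ((L1 ++ blk1 n R j).take (p0 + (n + k.1) + 1))) with hb
  have inj_a : Function.Injective a := by
    intro k k' hkk'
    by_contra hne
    have hkv : k.1 ≠ k'.1 := fun hh => hne (Fin.ext hh)
    have h2 := two_le_congA A LY ⟨p0 + k.1, hbY _ (by omega)⟩ ⟨p0 + k'.1, hbY _ (by omega)⟩
      (by intro hh; exact hkv (by have := congrArg Fin.val hh; simpa using this))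
      (by rw [hassY k.1 (by omega), hassY k'.1 (by omega)]; exact hkk')
      (Or.inl (by
        rw [hgetY1 k.1 (by omega), hgetY1 k'.1 (by omega),
          (blk1_lo n R j k.1 k.2 _).1, (blk1_lo n R j k'.1 k'.2 _).1]))
    omega
  have inj_b : Function.Injective b := by
    intro k k' hkk'
    by_contra hne
    have hkv : k.1 ≠ k'.1 := fun hh => hne (Fin.ext hh)
    have h2 := two_le_congA A LY ⟨p0 + (n + k.1), hbY _ (by omega)⟩
      ⟨p0 + (n + k'.1), hbY _ (by omega)⟩
      (by intro hh; exact hkv (by have := congrArg Fin.val hh; simpa using this))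
      (by rw [hassY (n + k.1) (by omega), hassY (n + k'.1) (by omega)]; exact hkk')
      (Or.inl (by
        rw [hgetY1 (n + k.1) (by omega), hgetY1 (n + k'.1) (by omega),
          (blk1_hi n R j k.1 k.2 _).1, (blk1_hi n R j k'.1 k'.2 _).1]))
    omega
  -- the Y-tail assignments
  set d : Fin (2 * n) → Fin (2 * n) :=
    (fun s => assign A LY ⟨p0 + (2 * n + s.1), hbY _ (by omega)⟩) with hd
  have hytl_inp : ∀ (m : ℕ) (hm : m < 2 * n) (h : m < (ytl n R j).length),
      ((ytl n R j)[m]'h).inp = ⟨3 * j.1 + 2, by omega⟩ := by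
    intro m hm h
    rcases Nat.lt_or_ge m n with hmn | hmn
    · exact (ytl_lo n R j m hmn h).1
    · obtain ⟨m', rfl⟩ : ∃ m', m = n + m' := ⟨m - n, by omega⟩
      exact (ytl_hi n R j m' (by omega) h).1
  have inj_d : Function.Injective d := by
    intro s s' hss'
    by_contra hne
    have hkv : s.1 ≠ s'.1 := fun hh => hne (Fin.ext hh)
    have h2 := two_le_congA A LY ⟨p0 + (2 * n + s.1), hbY _ (by omega)⟩
      ⟨p0 + (2 * n + s'.1), hbY _ (by omega)⟩
      (by intro hh; exact hkv (by have := congrArg Fin.val hh; simpa using this))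
      hss'
      (Or.inl (by
        rw [hgetY2 s.1 s.2, hgetY2 s'.1 s'.2,
          hytl_inp s.1 s.2 _, hytl_inp s'.1 s'.2 _]))
    omega
  have surj_d : Function.Surjective d := Finite.injective_iff_surjective.mp inj_d
  by_cases hmeet : ∃ k1 k2, a k1 = b k2
  · obtain ⟨k1, k2, hab⟩ := hmeet
    obtain ⟨s, hs⟩ := surj_d (a k1)
    obtain ⟨sv, hslt⟩ := s
    rcases Nat.lt_or_ge sv n with hsn | hsn
    · -- output link O1 congested in LY
      have h2 := two_le_congA A LY ⟨p0 + k1.1, hbY _ (by omega)⟩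
        ⟨p0 + (2 * n + sv), hbY _ (by omega)⟩
        (by intro hh; have := congrArg Fin.val hh; simp at this; omega)
        (by rw [hassY k1.1 (by omega)]; show a k1 = d ⟨sv, hslt⟩; exact hs.symm)
        (Or.inr (by
          rw [hgetY1 k1.1 (by omega), hgetY2 sv hslt,
            (blk1_lo n R j k1.1 k1.2 _).2, (ytl_lo n R j sv hsn _).2]))
      omega
    · -- output link O2 congested in LY
      obtain ⟨s', rfl⟩ : ∃ s', sv = n + s' := ⟨sv - n, by omega⟩
      have h2 := two_le_congA A LY ⟨p0 + (n + k2.1), hbY _ (by omega)⟩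
        ⟨p0 + (2 * n + (n + s')), hbY _ (by omega)⟩
        (by intro hh; have := congrArg Fin.val hh; simp at this; omega)
        (by rw [hassY (n + k2.1) (by omega)]
            show b k2 = d ⟨n + s', hslt⟩
            rw [← hab]; exact hs.symm)
        (Or.inr (by
          rw [hgetY1 (n + k2.1) (by omega), hgetY2 (n + s') hslt,
            (blk1_hi n R j k2.1 k2.2 _).2, (ytl_hi n R j s' (by omega) _).2]))
      omega
  · push_neg at hmeet
    have hdisj : Disjoint (Finset.image a Finset.univ) (Finset.image b Finset.univ) := by
      rw [Finset.disjoint_left]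
      intro m hma hmb
      obtain ⟨k1, _, hk1⟩ := Finset.mem_image.mp hma
      obtain ⟨k2, _, hk2⟩ := Finset.mem_image.mp hmb
      exact hmeet k1 k2 (hk1.trans hk2.symm)
    have hcard : (Finset.image a Finset.univ ∪ Finset.image b Finset.univ).card = 2 * n := by
      rw [Finset.card_union_of_disjoint hdisj, Finset.card_image_of_injective _ inj_a,
        Finset.card_image_of_injective _ inj_b, Finset.card_univ, Fintype.card_fin]
      omega
    have huniv : Finset.image a Finset.univ ∪ Finset.image b Finset.univ =
        Finset.univ := Finset.eq_univ_of_card _ (by rw [hcard]; simp)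
    set c0 : Fin (2 * n) := assign A LX ⟨p0 + (2 * n + 0), hbX _ (by omega)⟩ with hc0
    have hc0mem : c0 ∈ Finset.image a Finset.univ ∪ Finset.image b Finset.univ := by
      rw [huniv]; exact Finset.mem_univ _
    rcases Finset.mem_union.mp hc0mem with hma | hmb
    · obtain ⟨k, _, hk⟩ := Finset.mem_image.mp hma
      have h2 := two_le_congA A LX ⟨p0 + k.1, hbX _ (by omega)⟩
        ⟨p0 + (2 * n + 0), hbX _ (by omega)⟩
        (by intro hh; have := congrArg Fin.val hh; simp at this; omega)
        (by rw [hassX k.1 (by omega)]; show a k = c0; exact hk)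
        (Or.inl (by
          rw [hgetX1 k.1 (by omega), hgetX2 0 (by omega),
            (blk1_lo n R j k.1 k.2 _).1, (xtl_get n R j 0 (by omega) _).1]))
      omega
    · obtain ⟨k, _, hk⟩ := Finset.mem_image.mp hmb
      have h2 := two_le_congA A LX ⟨p0 + (n + k.1), hbX _ (by omega)⟩
        ⟨p0 + (2 * n + 0), hbX _ (by omega)⟩
        (by intro hh; have := congrArg Fin.val hh; simp at this; omega)
        (by rw [hassX (n + k.1) (by omega)]; show b k = c0; exact hk)
        (Or.inr (by
          rw [hgetX1 (n + k.1) (by omega), hgetX2 0 (by omega),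
            (blk1_hi n R j k.1 k.2 _).2, (xtl_get n R j 0 (by omega) _).2]))
      omega


/-- The supersequence `S_B` for a subset `B` of the `S = ⌊R/3⌋` blocks: the
concatenation, for `j = 1, …, S` in order, of `Y_j` if `j ∈ B` and of `X_j`
otherwise. -/
def seqB (n R : ℕ) (B : Finset (Fin (R / 3))) : List (UFlow (2 * n) R) :=
  (List.finRange (R / 3)).flatMap fun j => if j ∈ B then blkY n R j else blkX n R j

lemma flatMap_congr' {α β : Type*} {l : List α} {f g : α → List β}
    (h : ∀ x ∈ l, f x = g x) : l.flatMap f = l.flatMap g := by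
  induction l with
  | nil => rfl
  | cons a l ih =>
    simp only [List.flatMap_cons]
    rw [h a (by simp), ih (fun x hx => h x (by simp [hx]))]

lemma seqB_split (n R : ℕ) (B : Finset (Fin (R / 3))) (j : Fin (R / 3)) :
    seqB n R B = (((List.finRange (R / 3)).take j.1).flatMap
        (fun i => if i ∈ B then blkY n R i else blkX n R i)) ++
      ((if j ∈ B then blkY n R j else blkX n R j) ++
        (((List.finRange (R / 3)).drop (j.1 + 1)).flatMap
          (fun i => if i ∈ B then blkY n R i else blkX n R i))) := by
  conv_lhs => rw [seqB, ← List.take_append_drop j.1 (List.finRange (R / 3))]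
  rw [List.flatMap_append]
  congr 1
  rw [List.drop_eq_getElem_cons (by simpa using j.2), List.flatMap_cons]
  congr 2 <;> simp

lemma mem_take_lt {S : ℕ} (j x : Fin S) (hx : x ∈ (List.finRange S).take j.1) :
    x < j := by
  rw [List.mem_take_iff_getElem] at hx
  obtain ⟨i, hi, heq⟩ := hx
  have : x.1 = i := by rw [← heq]; simp
  rw [Fin.lt_def, this]
  simp at hi
  omega


/-- For every deterministic online algorithm `A`, the sum over all `2^S` subsets
`B ⊆ {1,…,S}` (`S = ⌊R/3⌋`) of the congestion of the routing induced by `A` on the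
supersequence `S_B` is at least `2·2^S − 1`; equivalently, the expected congestion
of `A` on a uniformly random `S_B` is at least `2 − 1/2^S`. -/
theorem online_expected_congestion_sum {n R : ℕ} (hn : 1 ≤ n) (hR : 3 ≤ R)
    (A : List (UFlow (2 * n) R) → Fin (2 * n)) :
    2 * 2 ^ (R / 3) - 1 ≤ ∑ B : Finset (Fin (R / 3)), congA A (seqB n R B) := by
  have hS1 : 1 ≤ R / 3 := by omega
  have h1 : ∀ B : Finset (Fin (R / 3)), 1 ≤ congA A (seqB n R B) := by
    intro B
    apply one_le_congA
    have hne : (if (⟨0, by omega⟩ : Fin (R / 3)) ∈ B then blkY n R ⟨0, by omega⟩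
        else blkX n R ⟨0, by omega⟩) ≠ [] := by
      split <;>
        (intro hcon; have := congrArg List.length hcon; simp [blkX, blkY] at this; omega)
    obtain ⟨x, hx⟩ := List.exists_mem_of_ne_nil _ hne
    exact List.ne_nil_of_mem (List.mem_flatMap.mpr ⟨_, List.mem_finRange _, hx⟩)
  have h2 : ∀ B B' : Finset (Fin (R / 3)), B ≠ B' →
      2 ≤ congA A (seqB n R B) ∨ 2 ≤ congA A (seqB n R B') := by
    intro B B' hBB'
    by_contra hcon
    push_neg at hcon
    obtain ⟨hB2, hB'2⟩ := hcon
    have hB1 : congA A (seqB n R B) ≤ 1 := by omega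
    have hB'1 : congA A (seqB n R B') ≤ 1 := by omega
    have hDne : ((B \ B') ∪ (B' \ B)).Nonempty := by
      by_contra hD
      apply hBB'
      rw [Finset.not_nonempty_iff_eq_empty, Finset.union_eq_empty] at hD
      exact Finset.Subset.antisymm (Finset.sdiff_eq_empty_iff_subset.mp hD.1)
        (Finset.sdiff_eq_empty_iff_subset.mp hD.2)
    set D := (B \ B') ∪ (B' \ B) with hD
    set j := D.min' hDne with hj
    have hjD : j ∈ D := Finset.min'_mem _ _
    have hlt : ∀ x : Fin (R / 3), x < j → (x ∈ B ↔ x ∈ B') := by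
      intro x hx
      by_contra hiff
      have hxD : x ∈ D := by
        simp only [hD, Finset.mem_union, Finset.mem_sdiff]
        tauto
      exact absurd hx (not_lt.mpr (Finset.min'_le D x hxD))
    have hpre : ((List.finRange (R / 3)).take j.1).flatMap
          (fun i => if i ∈ B then blkY n R i else blkX n R i)
        = ((List.finRange (R / 3)).take j.1).flatMap
          (fun i => if i ∈ B' then blkY n R i else blkX n R i) := by
      apply flatMap_congr'
      intro x hx
      obtain ⟨hmp, hmpr⟩ := hlt x (mem_take_lt j x hx)
      by_cases hxB : x ∈ B
      · rw [if_pos hxB, if_pos (hmp hxB)]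
      · rw [if_neg hxB, if_neg (fun hc => hxB (hmpr hc))]
    rcases Finset.mem_union.mp hjD with hjd | hjd
    · obtain ⟨hjB, hjB'⟩ := Finset.mem_sdiff.mp hjd
      have hY1 := hB1
      rw [seqB_split n R B j, if_pos hjB, ← List.append_assoc] at hY1
      have hX1 := hB'1
      rw [seqB_split n R B' j, if_neg hjB', ← hpre, ← List.append_assoc] at hX1
      exact key hn A j _ _ _ hY1 hX1
    · obtain ⟨hjB', hjB⟩ := Finset.mem_sdiff.mp hjd
      have hY1 := hB'1
      rw [seqB_split n R B' j, if_pos hjB', ← hpre, ← List.append_assoc] at hY1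
      have hX1 := hB1
      rw [seqB_split n R B j, if_neg hjB, ← List.append_assoc] at hX1
      exact key hn A j _ _ _ hY1 hX1
  classical
  set T := Finset.univ.filter
    (fun B : Finset (Fin (R / 3)) => congA A (seqB n R B) ≤ 1) with hT
  set Tc := Finset.univ.filter
    (fun B : Finset (Fin (R / 3)) => ¬ congA A (seqB n R B) ≤ 1) with hTc
  have hTcard : T.card ≤ 1 := by
    rw [Finset.card_le_one]
    intro B hB C hC
    by_contra hne
    rcases h2 B C hne with h | h
    · have := (Finset.mem_filter.mp hB).2; omega
    · have := (Finset.mem_filter.mp hC).2; omega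
  have hsplit : (∑ B ∈ T, congA A (seqB n R B)) + (∑ B ∈ Tc, congA A (seqB n R B))
      = ∑ B : Finset (Fin (R / 3)), congA A (seqB n R B) :=
    Finset.sum_filter_add_sum_filter_not Finset.univ _ _
  have hcards : T.card + Tc.card = 2 ^ (R / 3) := by
    rw [hT, hTc, Finset.card_filter_add_card_filter_not]
    simp
  have hb1 : T.card * 1 ≤ ∑ B ∈ T, congA A (seqB n R B) := by
    simpa using Finset.card_nsmul_le_sum T _ 1 (fun B _ => h1 B)
  have hb2 : Tc.card * 2 ≤ ∑ B ∈ Tc, congA A (seqB n R B) := by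
    exact Finset.card_nsmul_le_sum Tc _ 2
      (fun B hB => by have := (Finset.mem_filter.mp hB).2; omega)
  omega
end
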